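/- If soc(A) is not a cyclic R-module, then for every subgroup G of Aut_R(A), A does not have the extension property with respect to swc_G: there exist a positive integer n, a linear code C ⊆ A^n, and an swc_G-isometry f : C → A^n that does not extend to a G-monomial map of A^n. -/

import Mathlib

/-!
Choose `x ∈ soc(A)` with `Rx` maximal among the cyclic submodules of `soc(A)`. Since `soc(A)` is
not cyclic, some simple `T ≤ soc(A)` meets `Rx` trivially, and maximality forces
`ann(x) ⊆ ann(T)`. Hence `Hom_R(Rx, T)` has dimension at least `e = dim_D T` over
`D = End_R(T)`, and splitting off copies of `T` from the semisimple module `Rx` embeds `T^e` in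
`Rx`; together with `T` this embeds `M = T^(e+1)` in `A`.

Matrices `Y ∈ M_{e+1}(D)` act on `M`, and as `e + 1 > e`, for every `m ∈ M` and `c ∈ D` some `Z`
has `Zm = 0` and `tr Z = c`. Translation by such `Z` matches the vectors `Ym` with `tr Y = 0`,
each taken once for every `c ≠ 0`, with the vectors `Ym` with `tr Y ≠ 0`. The two codes with
these coordinates (plus the coordinate `m` itself) therefore differ on each codeword by a
permutation of coordinates, so the identification of their codewords preserves every `swc_G`.
It extends to no monomial map: the first code has the zero coordinate `Y = 0`, the second
has no identically zero coordinate.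
-/

variable {R A : Type*} [Ring R] [AddCommGroup A] [Module R A]

/-- The orbit of `a₀ ∈ A` under a subgroup `G ≤ Aut_R(A)`; the orbits in `A/G` are
exactly the sets `orbitG G a₀` for `a₀ : A`. -/
def orbitG (G : Subgroup (A ≃ₗ[R] A)) (a₀ : A) : Set A :=
  {b | ∃ g ∈ G, (g : A ≃ₗ[R] A) a₀ = b}

/-- The symmetrized weight composition built on `G`: `swcG G a a₀` is the number of
coordinates of `a ∈ A^n` lying in the orbit of `a₀`. -/
noncomputable def swcG (G : Subgroup (A ≃ₗ[R] A)) {n : ℕ} (a : Fin n → A) (a₀ : A) : ℚ :=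
  Nat.card {i : Fin n // a i ∈ orbitG G a₀}

/-- Membership in the closure `Ḡ` of `G`. -/
def inClosure (G : Subgroup (A ≃ₗ[R] A)) (g : A ≃ₗ[R] A) : Prop :=
  ∀ a₀ : A, (g : A ≃ₗ[R] A) '' orbitG G a₀ = orbitG G a₀

def IsGMonomial (G : Subgroup (A ≃ₗ[R] A)) {n : ℕ} (h : (Fin n → A) → (Fin n → A)) : Prop :=
  ∃ (π : Equiv.Perm (Fin n)) (g : Fin n → (A ≃ₗ[R] A)),
    (∀ i, inClosure G (g i)) ∧ ∀ (a : Fin n → A) (i : Fin n), h a i = (g i) (a (π i))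

/-- The socle of a module: the sum of all simple submodules, i.e. the supremum of the
atoms of the submodule lattice. -/
def socle (R A : Type*) [Ring R] [AddCommGroup A] [Module R A] : Submodule R A :=
  sSup {S : Submodule R A | IsAtom S}

def HasExtensionProperty (R : Type*) (A : Type*) [Ring R] [AddCommGroup A] [Module R A]
    (G : Subgroup (A ≃ₗ[R] A)) : Prop :=
  ∀ n : ℕ, 0 < n → ∀ (C : Submodule R (Fin n → A)) (f : C →ₗ[R] (Fin n → A)),
    (∀ (c : C) (a₀ : A), swcG G (f c : Fin n → A) a₀ = swcG G (c : Fin n → A) a₀) →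
    ∃ h : (Fin n → A) → (Fin n → A),
      IsGMonomial G h ∧ ∀ c : C, h (c : Fin n → A) = f c


open Function Module Submodule

theorem LinearMap.injective_coprod_of_disjoint_range {M X Y : Type*} [AddCommGroup M]
    [Module R M] [AddCommGroup X] [Module R X] [AddCommGroup Y] [Module R Y] {f : X →ₗ[R] M}
    {g : Y →ₗ[R] M} (hf : Injective f) (hg : Injective g)
    (hfg : Disjoint (LinearMap.range f) (LinearMap.range g)) : Injective (f.coprod g) := by
  rw [← LinearMap.ker_eq_bot, LinearMap.ker_coprod_of_disjoint_range f g hfg,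
    LinearMap.ker_eq_bot.mpr hf, LinearMap.ker_eq_bot.mpr hg, prod_bot]

theorem exists_linearMap_span_singleton_apply_eq {N : Type*} [AddCommGroup N] [Module R N]
    {x : A} {t : N} (h : ∀ r : R, r • x = 0 → r • t = 0) :
    ∃ f : (R ∙ x) →ₗ[R] N, f ⟨x, mem_span_singleton_self x⟩ = t := by
  refine ⟨(Ideal.torsionOf R A x).liftQ (LinearMap.toSpanSingleton R N t) (fun r hr => h r hr) ∘ₗ
    (Ideal.quotTorsionOfEquivSpanSingleton R A x).symm.toLinearMap, ?_⟩
  have : (Ideal.quotTorsionOfEquivSpanSingleton R A x).symm ⟨x, mem_span_singleton_self x⟩ =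
      Submodule.Quotient.mk 1 := by
    rw [LinearEquiv.symm_apply_eq, Ideal.quotTorsionOfEquivSpanSingleton_apply_mk, one_smul]
  rw [LinearMap.comp_apply, LinearEquiv.coe_coe, this]
  exact one_smul R t

theorem smul_eq_zero_of_maximalFor_span_singleton {S T : Submodule R A} {x : A}
    (hx : MaximalFor (· ∈ S) (fun y => R ∙ y) x) (hT : IsAtom T) (hTS : T ≤ S)
    (hTx : ¬ T ≤ R ∙ x) {t : A} (ht : t ∈ T) {r : R} (hr : r • x = 0) : r • t = 0 := by
  by_contra hrt
  have hrt' : r • t ∈ R ∙ (x + t) := by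
    simpa [smul_add, hr] using smul_mem _ r (mem_span_singleton_self (x + t))
  have hT' : T ≤ R ∙ (x + t) :=
    hT.not_disjoint_iff_le.mp fun hd => hrt (disjoint_def.mp hd _ (smul_mem _ r ht) hrt')
  have hx' : R ∙ x ≤ R ∙ (x + t) := by
    rw [span_singleton_le_iff_mem]
    simpa using sub_mem (mem_span_singleton_self (x + t)) (hT' ht)
  exact hTx (hT'.trans (hx.2 (add_mem hx.1 (hTS ht)) hx'))

instance isSemisimpleModule_socle : IsSemisimpleModule R (socle R A) := by
  rw [socle, sSup_eq_iSup]
  refine isSemisimpleModule_biSup_of_isSemisimpleModule_submodule fun S hS => ?_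
  have : IsSimpleModule R S := isSimpleModule_iff_isAtom.mpr hS
  infer_instance

section Code

variable {G : Subgroup (A ≃ₗ[R] A)} {n : ℕ} {C : Submodule R (Fin n → A)}

def IsSwcIsometry (G : Subgroup (A ≃ₗ[R] A)) (f : C →ₗ[R] (Fin n → A)) : Prop :=
  ∀ (c : C) (a₀ : A), swcG G (f c : Fin n → A) a₀ = swcG G (c : Fin n → A) a₀

def HasGMonomialExtension (G : Subgroup (A ≃ₗ[R] A)) (f : C →ₗ[R] (Fin n → A)) : Prop :=
  ∃ h : (Fin n → A) → (Fin n → A), IsGMonomial G h ∧ ∀ c : C, h (c : Fin n → A) = f c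

theorem swcG_comp_perm (a : Fin n → A) (σ : Equiv.Perm (Fin n)) (a₀ : A) :
    swcG G (a ∘ σ) a₀ = swcG G a a₀ := by
  unfold swcG
  exact congrArg _ (Nat.card_congr (σ.subtypeEquiv fun _ => Iff.rfl))

theorem isSwcIsometry_of_forall_exists_perm {f : C →ₗ[R] (Fin n → A)}
    (hf : ∀ c : C, ∃ σ : Equiv.Perm (Fin n), (f c : Fin n → A) = c ∘ σ) :
    IsSwcIsometry G f := by
  intro c a₀
  obtain ⟨σ, hσ⟩ := hf c
  rw [hσ, swcG_comp_perm]

theorem not_hasGMonomialExtension_of_apply_eq_zero {f : C →ₗ[R] (Fin n → A)} (i₀ : Fin n)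
    (hC : ∀ c : C, (c : Fin n → A) i₀ = 0) (hf : ∀ i, ∃ c : C, f c i ≠ 0) :
    ¬ HasGMonomialExtension G f := by
  rintro ⟨h, ⟨π, g, -, hg⟩, hext⟩
  obtain ⟨c, hc⟩ := hf (π.symm i₀)
  rw [← hext, hg, π.apply_symm_apply, hC, map_zero] at hc
  exact hc rfl

end Code

section Construction

variable {M : Type*} [AddCommGroup M] [Module R M]

theorem exists_not_hasGMonomialExtension_of_coords {JP JN : Type*} [Finite JN]
    (cP : JP → M →ₗ[R] A) (cN : JN → M →ₗ[R] A) (e : M → JP ≃ JN)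
    (he : ∀ m j, cN (e m j) m = cP j m) (hP : ∀ m, (∀ j, cP j m = 0) → m = 0)
    (j₀ : JP) (hj₀ : cP j₀ = 0) (hN : ∀ j, cN j ≠ 0) (G : Subgroup (A ≃ₗ[R] A)) :
    ∃ n : ℕ, 0 < n ∧ ∃ (C : Submodule R (Fin n → A)) (f : C →ₗ[R] (Fin n → A)),
      IsSwcIsometry G f ∧ ¬ HasGMonomialExtension G f := by
  let τN : Fin (Nat.card JN) ≃ JN := (Finite.equivFin JN).symm
  let τP : Fin (Nat.card JN) ≃ JP := τN.trans (e 0).symm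
  let ιP : M →ₗ[R] (Fin (Nat.card JN) → A) := LinearMap.pi fun i => cP (τP i)
  let ιN : M →ₗ[R] (Fin (Nat.card JN) → A) := LinearMap.pi fun i => cN (τN i)
  have hιP : Injective ιP := by
    refine (injective_iff_map_eq_zero ιP).mpr fun m hm => hP m fun j => ?_
    simpa [ιP] using congrFun hm (τP.symm j)
  let eP := LinearEquiv.ofInjective ιP hιP
  refine ⟨Nat.card JN, Finite.card_pos_iff.mpr ⟨e 0 j₀⟩, LinearMap.range ιP,
    ιN ∘ₗ eP.symm.toLinearMap, isSwcIsometry_of_forall_exists_perm ?_,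
    not_hasGMonomialExtension_of_apply_eq_zero (τP.symm j₀) ?_ ?_⟩
  · intro c
    obtain ⟨m, rfl⟩ := eP.surjective c
    refine ⟨τN.trans ((e m).symm.trans τP.symm), funext fun i => ?_⟩
    simp [ιN, ιP, eP, ← he m]
  · rintro ⟨_, m, rfl⟩
    simp [ιP, hj₀]
  · intro i
    obtain ⟨m, hm⟩ := not_forall.mp fun h => hN (τN i) (LinearMap.ext h)
    exact ⟨eP m, by simpa [ιN] using hm⟩

def kerProdNeZeroEquiv {V W : Type*} [AddCommGroup V] [AddCommGroup W] (τ : V →+ W)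
    (Z : W → V) (hZ : ∀ c, τ (Z c) = c) :
    {Y // τ Y = 0} × {c : W // c ≠ 0} ≃ {Y // τ Y ≠ 0} where
  toFun p := ⟨p.1 + Z p.2, by simp [p.1.2, hZ, p.2.2]⟩
  invFun Y := (⟨Y - Z (τ Y), by simp [hZ]⟩, ⟨τ Y, Y.2⟩)
  left_inv p := by ext <;> simp [p.1.2, hZ]
  right_inv Y := by ext; simp

/- In both codes the coordinate `none` is `Φ` itself: it makes the first code a copy of `M`
and keeps the second free of identically zero coordinates. -/
theorem exists_not_hasGMonomialExtension_of_trace [Nontrivial M] {V W : Type*}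
    [AddCommGroup V] [Finite V] [AddCommGroup W] [Nontrivial W]
    (act : V →+ Module.End R M) (τ : V →+ W) (hact : ∀ Y, τ Y ≠ 0 → act Y ≠ 0)
    (hZ : ∀ m c, ∃ Z, act Z m = 0 ∧ τ Z = c) (Φ : M →ₗ[R] A) (hΦ : Injective Φ)
    (G : Subgroup (A ≃ₗ[R] A)) :
    ∃ n : ℕ, 0 < n ∧ ∃ (C : Submodule R (Fin n → A)) (f : C →ₗ[R] (Fin n → A)),
      IsSwcIsometry G f ∧ ¬ HasGMonomialExtension G f := by
  choose Z hZact hZτ using hZ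
  obtain ⟨c₀, hc₀⟩ := exists_ne (0 : W)
  have hΦ0 : ∀ m, Φ m = 0 → m = 0 := fun m => (hΦ.eq_iff' (map_zero Φ)).mp
  refine exists_not_hasGMonomialExtension_of_coords
    (fun j => j.elim Φ fun p => Φ ∘ₗ act p.1) (fun j => j.elim Φ fun Y => Φ ∘ₗ act Y)
    (fun m => (kerProdNeZeroEquiv τ (Z m) (hZτ m)).optionCongr) ?_ (fun m hm => hΦ0 m (hm none))
    (some (⟨0, map_zero τ⟩, ⟨c₀, hc₀⟩)) (by simp) ?_ G
  · rintro m (_ | p) <;> simp [kerProdNeZeroEquiv, hZact]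
  · rintro (_ | Y) h
    · obtain ⟨m, hm⟩ := exists_ne (0 : M)
      exact hm (hΦ0 m (LinearMap.congr_fun h m))
    · exact hact Y Y.2 (LinearMap.ext fun m => hΦ0 _ (LinearMap.congr_fun h m))

end Construction

section Simple

variable {T : Type*} [AddCommGroup T] [Module R T] [IsSimpleModule R T]

theorem finrank_le_finrank_linearMap_span_singleton [Finite A] [Finite T] {x : A}
    (h : ∀ t : T, ∀ r : R, r • x = 0 → r • t = 0) :
    finrank (Module.End R T) T ≤ finrank (Module.End R T) ((R ∙ x) →ₗ[R] T) := by
  classical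
  have : Finite ((R ∙ x) →ₗ[R] T) := .of_injective _ DFunLike.coe_injective
  refine LinearMap.finrank_le_finrank_of_surjective
    (f := LinearMap.applyₗ' (Module.End R T) ⟨x, mem_span_singleton_self x⟩) fun t => ?_
  simpa using exists_linearMap_span_singleton_apply_eq (h t)

theorem exists_ne_zero_comp_eq_zero {X : Type*} [AddCommGroup X] [Module R X] {m : ℕ}
    (ι : (Fin m → T) →ₗ[R] X) (hm : m < finrank (Module.End R T) (X →ₗ[R] T)) :
    ∃ h : X →ₗ[R] T, h ≠ 0 ∧ h ∘ₗ ι = 0 := by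
  classical
  have : Module.Finite (Module.End R T) (X →ₗ[R] T) := Module.finite_of_finrank_pos (by omega)
  let Θ : (X →ₗ[R] T) →ₗ[Module.End R T] (Fin m → Module.End R T) :=
    { toFun h j := h ∘ₗ ι ∘ₗ LinearMap.single R (fun _ => T) j
      map_add' _ _ := rfl
      map_smul' _ _ := rfl }
  obtain ⟨h, hh, hne⟩ := exists_mem_ne_zero_of_ne_bot
    (LinearMap.ker_ne_bot_of_finrank_lt (f := Θ) (by rwa [finrank_fin_fun]))
  exact ⟨h, hne, LinearMap.pi_ext' fun j => congrFun hh j⟩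

theorem exists_injective_pi_of_le_finrank {S : Type*} [AddCommGroup S] [Module R S]
    [IsSemisimpleModule R S] {m : ℕ} (hm : m ≤ finrank (Module.End R T) (S →ₗ[R] T)) :
    ∃ ι : (Fin m → T) →ₗ[R] S, Injective ι := by
  induction m with
  | zero => exact ⟨0, injective_of_subsingleton _⟩
  | succ m ih =>
    obtain ⟨ι, hι⟩ := ih (by omega)
    obtain ⟨h, hne, hhι⟩ := exists_ne_zero_comp_eq_zero ι (by omega)
    obtain ⟨s, hs⟩ := IsSemisimpleModule.lifting_property h (LinearMap.surjective_of_ne_zero hne)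
      LinearMap.id
    have hsinj : Injective s := LeftInverse.injective (g := h) (LinearMap.congr_fun hs)
    refine ⟨s.coprod ι ∘ₗ (Fin.consLinearEquiv R fun _ => T).symm.toLinearMap,
      (LinearMap.injective_coprod_of_disjoint_range hsinj hι ?_).comp (LinearEquiv.injective _)⟩
    rw [disjoint_iff_inf_le]
    rintro _ ⟨⟨t, rfl⟩, ⟨v, hv⟩⟩
    have ht : t = h (s t) := (LinearMap.congr_fun hs t).symm
    rw [← hv, ← LinearMap.comp_apply, hhι, LinearMap.zero_apply] at ht
    simp [ht]

theorem exists_matrix_apply_eq_zero_trace_eq [DecidableEq (Module.End R T)] [Finite T] {k : ℕ}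
    (hk : finrank (Module.End R T) T < k) (m : Fin k → T) (c : Module.End R T) :
    ∃ Z, (endVecRingEquivMatrixEnd (Fin k) R T).symm Z m = 0 ∧ Z.trace = c := by
  obtain ⟨z, hz, hz0⟩ := exists_mem_ne_zero_of_ne_bot <|
    LinearMap.ker_ne_bot_of_finrank_lt (f := Fintype.linearCombination (Module.End R T) m)
      (by rwa [finrank_fin_fun])
  rw [LinearMap.mem_ker, Fintype.linearCombination_apply] at hz
  obtain ⟨i₀, hi₀⟩ := Function.ne_iff.mp hz0
  set d := c * (z i₀)⁻¹
  refine ⟨Matrix.of (Pi.single i₀ (d • z)), funext fun i => ?_, ?_⟩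
  · change ∑ j, (Pi.single (M := fun _ => Fin k → Module.End R T) i₀ (d • z) i j) (m j) = 0
    rcases eq_or_ne i i₀ with rfl | hi
    · simp only [Pi.single_eq_same, Pi.smul_apply, smul_eq_mul, Module.End.mul_apply, ← map_sum]
      exact (congrArg d hz).trans (map_zero d)
    · simp [hi]
  · rw [Matrix.trace, Finset.sum_eq_single i₀ (fun i _ hi => by simp [hi]) (by simp)]
    simpa [d] using inv_mul_cancel_right₀ hi₀ c

theorem exists_not_hasGMonomialExtension_of_finrank_lt [Finite T] {k : ℕ}
    (hk : finrank (Module.End R T) T < k) (Φ : (Fin k → T) →ₗ[R] A) (hΦ : Injective Φ)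
    (G : Subgroup (A ≃ₗ[R] A)) :
    ∃ n : ℕ, 0 < n ∧ ∃ (C : Submodule R (Fin n → A)) (f : C →ₗ[R] (Fin n → A)),
      IsSwcIsometry G f ∧ ¬ HasGMonomialExtension G f := by
  classical
  have : Nonempty (Fin k) := ⟨⟨0, by omega⟩⟩
  have : Nontrivial T := IsSimpleModule.nontrivial R T
  have : Finite (Module.End R T) := .of_injective _ DFunLike.coe_injective
  let act := (endVecRingEquivMatrixEnd (Fin k) R T).symm
  refine exists_not_hasGMonomialExtension_of_trace act.toAddMonoidHom
    (Matrix.traceAddMonoidHom (Fin k) (Module.End R T)) (fun Y hY => ?_)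
    (exists_matrix_apply_eq_zero_trace_eq hk) Φ hΦ G
  refine (map_ne_zero_iff _ act.injective).mpr ?_
  rintro rfl
  exact hY (map_zero _)

end Simple

theorem exists_injective_pi_of_socle_not_cyclic [Finite A]
    (hncyc : ¬ ∃ a : A, socle R A = R ∙ a) :
    ∃ T : Submodule R A, IsAtom T ∧
      ∃ Φ : (Fin (finrank (Module.End R T) T + 1) → T) →ₗ[R] A, Injective Φ := by
  obtain ⟨x, hx⟩ := (socle R A : Set A).toFinite.exists_maximalFor (fun y => R ∙ y) _
    ⟨0, zero_mem _⟩
  have hxS : R ∙ x ≤ socle R A := (span_singleton_le_iff_mem _ _).mpr hx.1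
  obtain ⟨T, hT, hTx⟩ : ∃ T : Submodule R A, IsAtom T ∧ ¬ T ≤ R ∙ x := by
    by_contra! h
    exact hncyc ⟨x, le_antisymm (sSup_le h) hxS⟩
  have : IsSimpleModule R T := isSimpleModule_iff_isAtom.mpr hT
  have : IsSemisimpleModule R (R ∙ x) := .of_injective _ (inclusion_injective hxS)
  obtain ⟨ι, hι⟩ := exists_injective_pi_of_le_finrank (finrank_le_finrank_linearMap_span_singleton
    fun t r hr => Subtype.ext (smul_eq_zero_of_maximalFor_span_singleton hx hT (le_sSup hT) hTx
      t.2 hr))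
  have hxι : Injective ((R ∙ x).subtype ∘ₗ ι) := (R ∙ x).injective_subtype.comp hι
  refine ⟨T, hT, T.subtype.coprod ((R ∙ x).subtype ∘ₗ ι) ∘ₗ
    (Fin.consLinearEquiv R fun _ => T).symm.toLinearMap,
    (LinearMap.injective_coprod_of_disjoint_range T.injective_subtype hxι ?_).comp
      (LinearEquiv.injective _)⟩
  rw [range_subtype]
  exact (hT.not_le_iff_disjoint.mp hTx).mono_right
    (LinearMap.range_comp_le_range _ _ |>.trans (range_subtype _).le)

theorem not_hasExtensionProperty_of_socle_not_cyclic_general [Finite A]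
    (hncyc : ¬ ∃ a : A, socle R A = Submodule.span R {a}) :
    ∀ G : Subgroup (A ≃ₗ[R] A),
      ∃ n : ℕ, 0 < n ∧
        ∃ (C : Submodule R (Fin n → A)) (f : C →ₗ[R] (Fin n → A)),
          (∀ (c : C) (a₀ : A), swcG G (f c : Fin n → A) a₀ = swcG G (c : Fin n → A) a₀) ∧
          ¬ ∃ h : (Fin n → A) → (Fin n → A),
              IsGMonomial G h ∧ ∀ c : C, h (c : Fin n → A) = f c := by
  intro G
  obtain ⟨T, hT, Φ, hΦ⟩ := exists_injective_pi_of_socle_not_cyclic hncyc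
  have : IsSimpleModule R T := isSimpleModule_iff_isAtom.mpr hT
  exact exists_not_hasGMonomialExtension_of_finrank_lt (Nat.lt_succ_self _) Φ hΦ G

/-- If `soc(A)` is not cyclic, then for every subgroup `G ≤ Aut_R(A)` the alphabet `A`
does not have the extension property with respect to `swc_G`: there are a positive
integer `n`, a linear code `C ⊆ A^n` and an `swc_G`-isometry `f : C → A^n` that does
not extend to a `G`-monomial map of `A^n`. -/
theorem not_hasExtensionProperty_of_socle_not_cyclic [Finite R] [Finite A]
    (hncyc : ¬ ∃ a : A, socle R A = Submodule.span R {a}) :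
    ∀ G : Subgroup (A ≃ₗ[R] A),
      ∃ n : ℕ, 0 < n ∧
        ∃ (C : Submodule R (Fin n → A)) (f : C →ₗ[R] (Fin n → A)),
          (∀ (c : C) (a₀ : A), swcG G (f c : Fin n → A) a₀ = swcG G (c : Fin n → A) a₀) ∧
          ¬ ∃ h : (Fin n → A) → (Fin n → A),
              IsGMonomial G h ∧ ∀ c : C, h (c : Fin n → A) = f c :=
  not_hasExtensionProperty_of_socle_not_cyclic_general hncyc
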